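/- arXiv:2311.00894 — 3 statements merged into one kernel-verified Lean document; each statement's English description precedes it below -/
import Mathlib

section
/- Let ρ* be a finitely supported discrete probability measure on ℝ^d with R = sup{‖θ‖ : θ ∈ supp(ρ*)} < ∞, let ρ^σ = ρ* ∗ N(0, σ²I_d), and let ρ₀ = N(0, β²I_d). Then KL(ρ^σ ‖ ρ₀) ≤ d log(β/σ) + (dσ² + R²)/(2β²) − d/2. -/
/-!
Since `t ↦ t log (t / q)` is convex, Jensen's inequality bounds the integrand pointwise by the
mixture of the integrands of the components, so the divergence of the mixture is at most the
average of `KL(N(θ, σ²I) ‖ N(0, β²I))` over `θ ∼ ρ*`. Each of these is explicit: the log-ratio of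
the two densities is `d log (β / σ) - ‖x - θ‖² / (2σ²) + ‖x‖² / (2β²)`, and under `N(θ, σ²I)` the
two squared norms have means `dσ²` and `dσ² + ‖θ‖²` (computed coordinatewise, the density being
a product of one-dimensional Gaussian densities); finally `‖θ‖ ≤ R` on the support.
-/

open MeasureTheory

/-- Density of the centered isotropic Gaussian `N(0, s² I_d)` on `ℝ^d`. -/
noncomputable def gaussDens (d : ℕ) (s : ℝ) (x : EuclideanSpace ℝ (Fin d)) : ℝ :=
  (2 * Real.pi * s ^ 2) ^ (-(d : ℝ) / 2) * Real.exp (-‖x‖ ^ 2 / (2 * s ^ 2))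

open ProbabilityTheory
open scoped NNReal

theorem mul_log_div_le_sum_mul_log_div {ι : Type*} (t : Finset ι) {w p : ι → ℝ}
    (hw : ∀ i ∈ t, 0 ≤ w i) (hw₁ : ∑ i ∈ t, w i = 1) (hp : ∀ i ∈ t, 0 ≤ p i) {q : ℝ}
    (hq : 0 < q) :
    (∑ i ∈ t, w i * p i) * Real.log ((∑ i ∈ t, w i * p i) / q)
      ≤ ∑ i ∈ t, w i * (p i * Real.log (p i / q)) := by
  have jensen := Real.convexOn_mul_log.map_sum_le hw hw₁ (p := fun i => p i / q)
    fun i hi => div_nonneg (hp i hi) hq.le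
  simp only [smul_eq_mul, ← mul_div_assoc, ← Finset.sum_div] at jensen
  calc _ = q * ((∑ i ∈ t, w i * p i) / q * Real.log ((∑ i ∈ t, w i * p i) / q)) := by
        field_simp
    _ ≤ q * ∑ i ∈ t, w i * (p i / q * Real.log (p i / q)) :=
        mul_le_mul_of_nonneg_left jensen hq.le
    _ = _ := by rw [Finset.mul_sum]; congr! 1 with i; field_simp

namespace ProbabilityTheory

variable {μ : ℝ} {v : ℝ≥0}

theorem integral_sub_sq_gaussianReal (c : ℝ) :
    ∫ x, (x - c) ^ 2 ∂gaussianReal μ v = v + (μ - c) ^ 2 := by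
  have hmemLp : MemLp (fun x => x - c) 2 (gaussianReal μ v) :=
    (memLp_id_gaussianReal 2).sub (memLp_const c)
  have hmean : ∫ x, (x - c) ∂gaussianReal μ v = μ - c := by
    rw [integral_sub (f := fun x => x) ((memLp_id_gaussianReal 1).integrable le_rfl)
      (integrable_const c), integral_id_gaussianReal, integral_const, probReal_univ, one_smul]
  have hvar := variance_eq_sub hmemLp
  rw [variance_sub_const (by fun_prop), variance_fun_id_gaussianReal, hmean] at hvar
  simp only [Pi.pow_apply] at hvar
  linarith

theorem integrable_gaussianPDFReal_mul_sub_sq (hv : v ≠ 0) (c : ℝ) :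
    Integrable fun x => gaussianPDFReal μ v x * (x - c) ^ 2 := by
  have h := ((memLp_id_gaussianReal 2).sub (memLp_const c)).integrable_sq
    (μ := gaussianReal μ v)
  rw [gaussianReal_of_var_ne_zero μ hv, gaussianPDF_def,
    integrable_withDensity_iff_integrable_smul' (by fun_prop) (by simp)] at h
  simpa [ENNReal.toReal_ofReal (gaussianPDFReal_nonneg _ _ _)] using h

theorem integral_gaussianPDFReal_mul_sub_sq (hv : v ≠ 0) (c : ℝ) :
    ∫ x, gaussianPDFReal μ v x * (x - c) ^ 2 = v + (μ - c) ^ 2 := by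
  rw [← integral_sub_sq_gaussianReal c, integral_gaussianReal_eq_integral_smul hv]
  rfl

end ProbabilityTheory

section ProductDensity

variable {ι E : Type*} [Fintype ι] [DecidableEq ι] {f : ι → E → ℝ}

theorem prod_mul_apply_eq_prod_mul_ite (h : E → ℝ) (j : ι) (y : ι → E) :
    (∏ i, f i (y i)) * h (y j) = ∏ i, f i (y i) * if i = j then h (y i) else 1 := by
  rw [Finset.prod_mul_distrib, Fintype.prod_ite_eq']

variable [MeasureSpace E] [SigmaFinite (volume : Measure E)]

theorem integrable_prod_mul_apply (hf : ∀ i, Integrable (f i)) {h : E → ℝ} {j : ι}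
    (hfh : Integrable fun t => f j t * h t) :
    Integrable fun y : ι → E => (∏ i, f i (y i)) * h (y j) := by
  simp_rw [prod_mul_apply_eq_prod_mul_ite]
  refine Integrable.fintype_prod (f := fun i t => f i t * if i = j then h t else 1) fun i => ?_
  by_cases hij : i = j
  · subst hij
    simpa using hfh
  · simpa [hij] using hf i

theorem integral_prod_mul_apply (hf : ∀ i, ∫ t, f i t = 1) (h : E → ℝ) (j : ι) :
    ∫ y : ι → E, (∏ i, f i (y i)) * h (y j) = ∫ t, f j t * h t := by
  simp_rw [prod_mul_apply_eq_prod_mul_ite]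
  rw [integral_fintype_prod_volume_eq_prod (fun i t => f i t * if i = j then h t else 1),
    Finset.prod_eq_single j (fun i _ hij => by simpa [hij] using hf i) (by simp)]
  simp

variable {v : ℝ≥0}

theorem integrable_prod_gaussianPDFReal_mul_sub_sq (hv : v ≠ 0) (μ c : ι → ℝ) (j : ι) :
    Integrable fun y : ι → ℝ => (∏ i, gaussianPDFReal (μ i) v (y i)) * (y j - c j) ^ 2 :=
  integrable_prod_mul_apply (f := fun i => gaussianPDFReal (μ i) v)
    (fun _ => integrable_gaussianPDFReal _ _) (integrable_gaussianPDFReal_mul_sub_sq hv (c j))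

theorem integral_prod_gaussianPDFReal_mul_sub_sq (hv : v ≠ 0) (μ c : ι → ℝ) (j : ι) :
    ∫ y : ι → ℝ, (∏ i, gaussianPDFReal (μ i) v (y i)) * (y j - c j) ^ 2 = v + (μ j - c j) ^ 2 :=
  (integral_prod_mul_apply (f := fun i => gaussianPDFReal (μ i) v)
    (fun _ => integral_gaussianPDFReal_eq_one _ hv) _ j).trans
    (integral_gaussianPDFReal_mul_sub_sq hv (c j))

end ProductDensity

section GaussDens

variable {d : ℕ} {s σ β : ℝ}

theorem gaussDens_pos (hs : s ≠ 0) (x : EuclideanSpace ℝ (Fin d)) : 0 < gaussDens d s x := by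
  unfold gaussDens
  positivity

theorem toNNReal_sq_ne_zero (hs : s ≠ 0) : (s ^ 2).toNNReal ≠ 0 := by
  simp [hs]

theorem gaussDens_sub_eq_prod (hs : s ≠ 0) (θ x : EuclideanSpace ℝ (Fin d)) :
    gaussDens d s (x - θ) = ∏ i, gaussianPDFReal (θ i) (s ^ 2).toNNReal (x i) := by
  have ha : 0 < 2 * Real.pi * s ^ 2 := by positivity
  simp only [gaussDens, gaussianPDFReal, Real.coe_toNNReal _ (sq_nonneg s),
    Finset.prod_mul_distrib, ← Real.exp_sum, Finset.prod_const, Finset.card_univ,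
    Fintype.card_fin, EuclideanSpace.norm_sq_eq, Real.norm_eq_abs, sq_abs, PiLp.sub_apply,
    ← Finset.sum_div, Finset.sum_neg_distrib]
  rw [Real.sqrt_eq_rpow, ← Real.rpow_neg ha.le, ← Real.rpow_natCast _ d, ← Real.rpow_mul ha.le]
  ring_nf

theorem gaussDens_sub_mul_norm_sub_sq_eq (hs : s ≠ 0) (θ c : EuclideanSpace ℝ (Fin d))
    (y : Fin d → ℝ) :
    gaussDens d s (WithLp.toLp 2 y - θ) * ‖WithLp.toLp 2 y - c‖ ^ 2
      = ∑ j, (∏ i, gaussianPDFReal (θ i) (s ^ 2).toNNReal (y i)) * (y j - c j) ^ 2 := by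
  simp [gaussDens_sub_eq_prod hs, EuclideanSpace.norm_sq_eq, Finset.mul_sum]

theorem integrable_gaussDens_sub (hs : s ≠ 0) (θ : EuclideanSpace ℝ (Fin d)) :
    Integrable fun x => gaussDens d s (x - θ) := by
  rw [← (PiLp.volume_preserving_toLp (Fin d)).integrable_comp_emb
    (MeasurableEquiv.toLp 2 _).measurableEmbedding]
  simp_rw [Function.comp_def, gaussDens_sub_eq_prod hs]
  exact Integrable.fintype_prod fun _ => integrable_gaussianPDFReal _ _

theorem integral_gaussDens_sub (hs : s ≠ 0) (θ : EuclideanSpace ℝ (Fin d)) :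
    ∫ x, gaussDens d s (x - θ) = 1 := by
  rw [← (PiLp.volume_preserving_toLp (Fin d)).integral_comp
    (MeasurableEquiv.toLp 2 _).measurableEmbedding]
  simp_rw [gaussDens_sub_eq_prod hs]
  rw [integral_fintype_prod_volume_eq_prod (fun i => gaussianPDFReal (θ i) (s ^ 2).toNNReal)]
  simp [integral_gaussianPDFReal_eq_one _ (toNNReal_sq_ne_zero hs)]

theorem integrable_gaussDens_sub_mul_norm_sub_sq (hs : s ≠ 0) (θ c : EuclideanSpace ℝ (Fin d)) :
    Integrable fun x => gaussDens d s (x - θ) * ‖x - c‖ ^ 2 := by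
  rw [← (PiLp.volume_preserving_toLp (Fin d)).integrable_comp_emb
    (MeasurableEquiv.toLp 2 _).measurableEmbedding]
  simp_rw [Function.comp_def, gaussDens_sub_mul_norm_sub_sq_eq hs]
  exact integrable_finsetSum _ fun j _ =>
    integrable_prod_gaussianPDFReal_mul_sub_sq (toNNReal_sq_ne_zero hs) _ _ j

theorem integral_gaussDens_sub_mul_norm_sub_sq (hs : s ≠ 0) (θ c : EuclideanSpace ℝ (Fin d)) :
    ∫ x, gaussDens d s (x - θ) * ‖x - c‖ ^ 2 = d * s ^ 2 + ‖θ - c‖ ^ 2 := by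
  rw [← (PiLp.volume_preserving_toLp (Fin d)).integral_comp
    (MeasurableEquiv.toLp 2 _).measurableEmbedding]
  simp_rw [gaussDens_sub_mul_norm_sub_sq_eq hs]
  rw [integral_finsetSum _ fun j _ =>
    integrable_prod_gaussianPDFReal_mul_sub_sq (toNNReal_sq_ne_zero hs) _ _ j]
  simp_rw [integral_prod_gaussianPDFReal_mul_sub_sq (toNNReal_sq_ne_zero hs)]
  simp [Finset.sum_add_distrib, EuclideanSpace.norm_sq_eq, Real.coe_toNNReal _ (sq_nonneg s)]

theorem log_gaussDens (hs : s ≠ 0) (x : EuclideanSpace ℝ (Fin d)) :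
    Real.log (gaussDens d s x)
      = -(d / 2) * Real.log (2 * Real.pi * s ^ 2) - ‖x‖ ^ 2 / (2 * s ^ 2) := by
  rw [gaussDens, Real.log_mul (by positivity) (Real.exp_ne_zero _),
    Real.log_rpow (by positivity), Real.log_exp]
  ring

theorem log_gaussDens_div_gaussDens (hσ : σ ≠ 0) (hβ : β ≠ 0) (x y : EuclideanSpace ℝ (Fin d)) :
    Real.log (gaussDens d σ x / gaussDens d β y)
      = d * Real.log (β / σ) - ‖x‖ ^ 2 / (2 * σ ^ 2) + ‖y‖ ^ 2 / (2 * β ^ 2) := by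
  have hπ : 2 * Real.pi ≠ 0 := by positivity
  rw [Real.log_div (gaussDens_pos hσ x).ne' (gaussDens_pos hβ y).ne', log_gaussDens hσ,
    log_gaussDens hβ, Real.log_mul hπ (by positivity), Real.log_mul hπ (by positivity),
    Real.log_pow, Real.log_pow, Real.log_div hβ hσ]
  push_cast
  ring

/-- The last moment is written with `‖x - 0‖` so that it is the case `c = 0` of
`integral_gaussDens_sub_mul_norm_sub_sq`. -/
theorem gaussDens_sub_mul_log_div_eq (hσ : σ ≠ 0) (hβ : β ≠ 0) (θ x : EuclideanSpace ℝ (Fin d)) :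
    gaussDens d σ (x - θ) * Real.log (gaussDens d σ (x - θ) / gaussDens d β x)
      = d * Real.log (β / σ) * gaussDens d σ (x - θ)
        - (2 * σ ^ 2)⁻¹ * (gaussDens d σ (x - θ) * ‖x - θ‖ ^ 2)
        + (2 * β ^ 2)⁻¹ * (gaussDens d σ (x - θ) * ‖x - 0‖ ^ 2) := by
  rw [log_gaussDens_div_gaussDens hσ hβ, sub_zero]
  ring

theorem integrable_gaussDens_sub_mul_log_div (hσ : σ ≠ 0) (hβ : β ≠ 0)
    (θ : EuclideanSpace ℝ (Fin d)) :
    Integrable fun x =>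
      gaussDens d σ (x - θ) * Real.log (gaussDens d σ (x - θ) / gaussDens d β x) := by
  simp_rw [gaussDens_sub_mul_log_div_eq hσ hβ θ]
  exact (((integrable_gaussDens_sub hσ θ).const_mul _).sub
    ((integrable_gaussDens_sub_mul_norm_sub_sq hσ θ θ).const_mul _)).add
    ((integrable_gaussDens_sub_mul_norm_sub_sq hσ θ 0).const_mul _)

theorem integral_gaussDens_sub_mul_log_div (hσ : σ ≠ 0) (hβ : β ≠ 0)
    (θ : EuclideanSpace ℝ (Fin d)) :
    ∫ x, gaussDens d σ (x - θ) * Real.log (gaussDens d σ (x - θ) / gaussDens d β x)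
      = d * Real.log (β / σ) + (d * σ ^ 2 + ‖θ‖ ^ 2) / (2 * β ^ 2) - d / 2 := by
  have hmass := (integrable_gaussDens_sub hσ θ).const_mul (d * Real.log (β / σ))
  have hσmoment := (integrable_gaussDens_sub_mul_norm_sub_sq hσ θ θ).const_mul (2 * σ ^ 2)⁻¹
  have hβmoment := (integrable_gaussDens_sub_mul_norm_sub_sq hσ θ 0).const_mul (2 * β ^ 2)⁻¹
  simp_rw [gaussDens_sub_mul_log_div_eq hσ hβ θ]
  rw [integral_add ?_ hβmoment, integral_sub hmass hσmoment, integral_const_mul,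
    integral_const_mul, integral_const_mul, integral_gaussDens_sub hσ,
    integral_gaussDens_sub_mul_norm_sub_sq hσ, integral_gaussDens_sub_mul_norm_sub_sq hσ,
    sub_self, sub_zero, norm_zero]
  · field_simp
    ring
  · exact hmass.sub hσmoment

end GaussDens

theorem kl_gaussian_smoothing_bound_general (d : ℕ) (σ β : ℝ)
    (hσ : 0 < σ) (hβ : 0 < β)
    (S : Finset (EuclideanSpace ℝ (Fin d))) (hS : S.Nonempty)
    (w : EuclideanSpace ℝ (Fin d) → ℝ)
    (hw : ∀ θ ∈ S, 0 ≤ w θ) (hsum : ∑ θ ∈ S, w θ = 1)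
    (hKL : Integrable (fun x =>
      (∑ θ ∈ S, w θ * gaussDens d σ (x - θ)) *
        Real.log ((∑ θ ∈ S, w θ * gaussDens d σ (x - θ)) / gaussDens d β x))) :
    ∫ x, (∑ θ ∈ S, w θ * gaussDens d σ (x - θ)) *
        Real.log ((∑ θ ∈ S, w θ * gaussDens d σ (x - θ)) / gaussDens d β x)
      ≤ d * Real.log (β / σ)
        + (d * σ ^ 2 + (S.sup' hS fun θ => ‖θ‖) ^ 2) / (2 * β ^ 2) - d / 2 := by
  have hcomponent : ∀ θ ∈ S, Integrable fun x =>
      w θ * (gaussDens d σ (x - θ) * Real.log (gaussDens d σ (x - θ) / gaussDens d β x)) :=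
    fun θ _ => (integrable_gaussDens_sub_mul_log_div hσ.ne' hβ.ne' θ).const_mul _
  calc _ ≤ ∫ x, ∑ θ ∈ S, w θ *
          (gaussDens d σ (x - θ) * Real.log (gaussDens d σ (x - θ) / gaussDens d β x)) :=
        integral_mono hKL (integrable_finsetSum _ hcomponent) fun x =>
          mul_log_div_le_sum_mul_log_div S hw hsum (fun θ _ => (gaussDens_pos hσ.ne' _).le)
            (gaussDens_pos hβ.ne' x)
    _ = ∑ θ ∈ S, w θ * (d * Real.log (β / σ) + (d * σ ^ 2 + ‖θ‖ ^ 2) / (2 * β ^ 2) - d / 2) := by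
        rw [integral_finsetSum _ hcomponent]
        simp_rw [integral_const_mul, integral_gaussDens_sub_mul_log_div hσ.ne' hβ.ne']
    _ ≤ ∑ θ ∈ S, w θ * (d * Real.log (β / σ)
          + (d * σ ^ 2 + (S.sup' hS fun θ => ‖θ‖) ^ 2) / (2 * β ^ 2) - d / 2) := by
        refine Finset.sum_le_sum fun θ hθ => mul_le_mul_of_nonneg_left ?_ (hw θ hθ)
        gcongr
        exact Finset.le_sup' (fun θ => ‖θ‖) hθ
    _ = _ := by rw [← Finset.sum_mul, hsum, one_mul]

/-- KL divergence bound after Gaussian smoothing of a finitely supported measure. -/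
theorem kl_gaussian_smoothing_bound (d : ℕ) (hd : 0 < d) (σ β : ℝ)
    (hσ : 0 < σ) (hβ : 0 < β)
    (S : Finset (EuclideanSpace ℝ (Fin d))) (hS : S.Nonempty)
    (w : EuclideanSpace ℝ (Fin d) → ℝ)
    (hw : ∀ θ ∈ S, 0 ≤ w θ) (hsum : ∑ θ ∈ S, w θ = 1)
    (hKL : Integrable (fun x =>
      (∑ θ ∈ S, w θ * gaussDens d σ (x - θ)) *
        Real.log ((∑ θ ∈ S, w θ * gaussDens d σ (x - θ)) / gaussDens d β x))) :
    ∫ x, (∑ θ ∈ S, w θ * gaussDens d σ (x - θ)) *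
        Real.log ((∑ θ ∈ S, w θ * gaussDens d σ (x - θ)) / gaussDens d β x)
      ≤ d * Real.log (β / σ)
        + (d * σ ^ 2 + (S.sup' hS fun θ => ‖θ‖) ^ 2) / (2 * β ^ 2) - d / 2 :=
  kl_gaussian_smoothing_bound_general d σ β hσ hβ S hS w hw hsum hKL
end

section
/- Let F be λ-relative strongly convex with respect to KL with λ ≥ 0, and suppose ρ_k minimizes ρ ↦ F(ρ) + (1/τ_k) KL(ρ ‖ ρ_{k−1}) with first-order optimality condition that δF/δρ(ρ_k) + (1/τ_k) log(ρ_k/ρ_{k−1}) is constant. Then for every probability density ρ: F(ρ_k) − F(ρ) ≤ (1/τ_k) KL(ρ ‖ ρ_{k−1}) − (1/τ_k + λ/2) KL(ρ ‖ ρ_k) − (1/τ_k) KL(ρ_k ‖ ρ_{k−1}). -/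
open MeasureTheory

/-- One-step improvement lemma for the implicit KL proximal descent step. -/
theorem iklpd_one_step_improve {Θ : Type*} [MeasurableSpace Θ] (μ : Measure Θ)
    (F : (Θ → ℝ) → ℝ) (δF : (Θ → ℝ) → Θ → ℝ)
    (lam τ : ℝ) (hlam : 0 ≤ lam) (hτ : 0 < τ)
    (ρk ρprev : Θ → ℝ)
    (hρk : ∀ θ, 0 < ρk θ) (hρprev : ∀ θ, 0 < ρprev θ)
    (hρk1 : ∫ θ, ρk θ ∂μ = 1) (hρprev1 : ∫ θ, ρprev θ ∂μ = 1)
    -- λ-relative strong convexity of F (relative to KL)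
    (hconv : ∀ f g : Θ → ℝ, (∀ θ, 0 < f θ) → (∀ θ, 0 < g θ) →
      (∫ θ, f θ ∂μ = 1) → (∫ θ, g θ ∂μ = 1) →
      F g + (∫ θ, δF g θ * (f θ - g θ) ∂μ)
          + lam * (∫ θ, f θ * Real.log (f θ / g θ) ∂μ) ≤ F f)
    -- first-order optimality of the implicit step at ρk
    (hopt : ∃ c : ℝ, ∀ θ, δF ρk θ + (1 / τ) * Real.log (ρk θ / ρprev θ) = c) :
    ∀ ρ : Θ → ℝ, (∀ θ, 0 < ρ θ) → (∫ θ, ρ θ ∂μ = 1) →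
      Integrable (fun θ => ρ θ * Real.log (ρ θ / ρprev θ)) μ →
      Integrable (fun θ => ρ θ * Real.log (ρ θ / ρk θ)) μ →
      Integrable (fun θ => ρk θ * Real.log (ρk θ / ρprev θ)) μ →
      Integrable (fun θ => δF ρk θ * (ρ θ - ρk θ)) μ →
      F ρk - F ρ ≤ (1 / τ) * (∫ θ, ρ θ * Real.log (ρ θ / ρprev θ) ∂μ)
        - (1 / τ + lam / 2) * (∫ θ, ρ θ * Real.log (ρ θ / ρk θ) ∂μ)
        - (1 / τ) * (∫ θ, ρk θ * Real.log (ρk θ / ρprev θ) ∂μ) := by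
  intro ρ hρ hρ1 Hp Hk Hkp HδF
  obtain ⟨c, hc⟩ := hopt
  -- ρ and ρk are integrable since their integrals are 1 ≠ 0
  have hρI : Integrable ρ μ := by
    by_contra h
    rw [integral_undef h] at hρ1
    norm_num at hρ1
  have hρkI : Integrable ρk μ := by
    by_contra h
    rw [integral_undef h] at hρk1
    norm_num at hρk1
  set Ip := ∫ θ, ρ θ * Real.log (ρ θ / ρprev θ) ∂μ with hIp
  set Ik := ∫ θ, ρ θ * Real.log (ρ θ / ρk θ) ∂μ with hIk
  set Ikp := ∫ θ, ρk θ * Real.log (ρk θ / ρprev θ) ∂μ with hIkp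
  -- KL(ρ‖ρk) ≥ 0
  have hIknn : 0 ≤ Ik := by
    have key : ∀ θ, ρ θ - ρk θ ≤ ρ θ * Real.log (ρ θ / ρk θ) := by
      intro θ
      have h1 := Real.log_le_sub_one_of_pos (div_pos (hρk θ) (hρ θ))
      rw [Real.log_div (hρk θ).ne' (hρ θ).ne'] at h1
      rw [Real.log_div (hρ θ).ne' (hρk θ).ne']
      have h2 : ρ θ * (Real.log (ρk θ) - Real.log (ρ θ)) ≤ ρ θ * (ρk θ / ρ θ - 1) :=
        mul_le_mul_of_nonneg_left h1 (hρ θ).le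
      have h3 : ρ θ * (ρk θ / ρ θ - 1) = ρk θ - ρ θ := by
        rw [mul_sub, mul_one, mul_div_cancel₀ _ (hρ θ).ne']
      nlinarith
    have h0 : ∫ θ, (ρ θ - ρk θ) ∂μ = 0 := by
      rw [integral_sub hρI hρkI, hρ1, hρk1]; ring
    have hsub : Integrable (fun θ => ρ θ - ρk θ) μ := hρI.sub hρkI
    have := integral_mono hsub Hk key
    rw [h0] at this
    exact this
  -- pointwise decomposition of the first-variation term
  have hδeq : (fun θ => δF ρk θ * (ρ θ - ρk θ)) = fun θ =>
      c * (ρ θ - ρk θ) - (1/τ) * (ρ θ * Real.log (ρ θ / ρprev θ)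
        - ρ θ * Real.log (ρ θ / ρk θ) - ρk θ * Real.log (ρk θ / ρprev θ)) := by
    funext θ
    have hθ := hc θ
    rw [Real.log_div (hρk θ).ne' (hρprev θ).ne'] at hθ
    rw [Real.log_div (hρ θ).ne' (hρprev θ).ne', Real.log_div (hρ θ).ne' (hρk θ).ne',
        Real.log_div (hρk θ).ne' (hρprev θ).ne']
    have hδ : δF ρk θ = c - 1/τ * (Real.log (ρk θ) - Real.log (ρprev θ)) := by
      linarith
    rw [hδ]; ring
  -- compute the integral of the first-variation term
  have hInt : ∫ θ, δF ρk θ * (ρ θ - ρk θ) ∂μ = -(1/τ) * (Ip - Ik - Ikp) := by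
    have hA : Integrable (fun θ => c * (ρ θ - ρk θ)) μ := (hρI.sub hρkI).const_mul c
    have hB0 : Integrable (fun θ => ρ θ * Real.log (ρ θ / ρprev θ)
        - ρ θ * Real.log (ρ θ / ρk θ)) μ := Hp.sub Hk
    have hB1 : Integrable (fun θ => ρ θ * Real.log (ρ θ / ρprev θ)
        - ρ θ * Real.log (ρ θ / ρk θ) - ρk θ * Real.log (ρk θ / ρprev θ)) μ := hB0.sub Hkp
    have hB : Integrable (fun θ => (1/τ) * (ρ θ * Real.log (ρ θ / ρprev θ)
        - ρ θ * Real.log (ρ θ / ρk θ) - ρk θ * Real.log (ρk θ / ρprev θ))) μ :=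
      hB1.const_mul (1/τ)
    rw [hδeq, integral_sub hA hB, integral_const_mul, integral_const_mul,
        integral_sub hρI hρkI, integral_sub hB0 Hkp, integral_sub Hp Hk, hρ1, hρk1]
    ring
  have hcv := hconv ρ ρk hρ hρk hρ1 hρk1
  rw [hInt] at hcv
  have hl : 0 ≤ lam * Ik := mul_nonneg hlam hIknn
  nlinarith [hcv, hl]
end

section
/- Let F be λ-relative strongly convex with λ ≥ 0 and suppose ρ_k^err satisfies the inexact optimality condition that η_k = δF/δρ(ρ_k^err) + (1/τ) log(ρ_k^err/ρ_{k−1}^err) has oscillation at most ε_k. Then, using Pinsker's inequality ‖ρ − ρ_k^err‖₁ ≤ √(2 KL(ρ ‖ ρ_k^err)), one has √(KL(ρ* ‖ ρ_k^err)) ≤ √(KL(ρ* ‖ ρ_{k−1}^err))/√(1 + τλ/2) + √2 τ ε_k, where ρ* is a global minimizer of F with density. -/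
/-!
Strong convexity at `ρ_k` towards `ρ*`, together with minimality of `ρ*`, gives
`∫ δF(ρ_k) (ρ* - ρ_k) ≤ -(λ/2) KL(ρ*‖ρ_k)`. The three-point identity turns the integral
of `log (ρ_k/ρ_{k-1})` against `ρ* - ρ_k` into
`KL(ρ*‖ρ_{k-1}) - KL(ρ*‖ρ_k) - KL(ρ_k‖ρ_{k-1})`; and since `ρ* - ρ_k` has mass zero,
`η_k` may be shifted by a constant, so that `|∫ η_k (ρ* - ρ_k)| ≤ ε ‖ρ* - ρ_k‖₁`.
With Pinsker's inequality this yields `(1 + τλ/2) A ≤ B + √2 τ ε √A` for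
`A = KL(ρ*‖ρ_k)` and `B = KL(ρ*‖ρ_{k-1})`, a quadratic inequality in `√A` whose
solution is the claim.
-/

open MeasureTheory Real InformationTheory

lemma le_of_hasDerivAt_of_deriv_sign {g g' : ℝ → ℝ} {a b x : ℝ} (hba : b < a)
    (hg : ∀ y, b < y → HasDerivAt g (g' y) y)
    (hleft : ∀ y, b < y → y < a → g' y ≤ 0) (hright : ∀ y, a < y → 0 ≤ g' y)
    (hx : b < x) : g a ≤ g x := by
  rcases le_total a x with hax | hxa
  · refine monotoneOn_of_hasDerivWithinAt_nonneg (f' := g') (convex_Ici a) ?_ ?_ ?_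
      Set.self_mem_Ici hax hax
    · exact fun y hy => (hg y (hba.trans_le hy)).continuousAt.continuousWithinAt
    · intro y hy
      rw [interior_Ici] at hy
      exact (hg y (hba.trans hy)).hasDerivWithinAt
    · intro y hy
      rw [interior_Ici] at hy
      exact hright y hy
  · refine antitoneOn_of_hasDerivWithinAt_nonpos (f' := g') (convex_Ioc b a) ?_ ?_ ?_
      ⟨hx, hxa⟩ ⟨hba, le_rfl⟩ hxa
    · exact fun y hy => (hg y hy.1).continuousAt.continuousWithinAt
    · intro y hy
      rw [interior_Ioc] at hy
      exact (hg y hy.1).hasDerivWithinAt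
    · intro y hy
      rw [interior_Ioc] at hy
      exact hleft y hy.1 hy.2

lemma monotoneOn_add_one_mul_log_sub :
    MonotoneOn (fun x => (x + 1) * log x - 2 * (x - 1)) (Set.Ioi 0) := by
  have hderiv : ∀ x : ℝ, 0 < x →
      HasDerivAt (fun x => (x + 1) * log x - 2 * (x - 1)) (log x - (1 - x⁻¹)) x := by
    intro x hx
    refine ((((hasDerivAt_id x).add_const 1).mul (hasDerivAt_log hx.ne')).sub
      (((hasDerivAt_id x).sub_const 1).const_mul 2)).congr_deriv ?_
    simp only [id]
    field_simp
    ring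
  refine monotoneOn_of_hasDerivWithinAt_nonneg (f' := fun x => log x - (1 - x⁻¹))
    (convex_Ioi 0) (fun x hx => (hderiv x hx).continuousAt.continuousWithinAt) ?_ ?_
  · intro x hx
    rw [interior_Ioi] at hx
    exact (hderiv x hx).hasDerivWithinAt
  · intro x hx
    rw [interior_Ioi] at hx
    exact sub_nonneg.2 (one_sub_inv_le_log_of_pos hx)

/-- The pointwise inequality behind Pinsker's inequality. -/
lemma three_halves_mul_sq_sub_one_le_mul_klFun {x : ℝ} (hx : 0 < x) :
    3 / 2 * (x - 1) ^ 2 ≤ (x + 2) * klFun x := by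
  set f := fun x : ℝ => (x + 1) * log x - 2 * (x - 1)
  have hf1 : f 1 = 0 := by simp [f]
  have key := le_of_hasDerivAt_of_deriv_sign
    (g := fun x => (x + 2) * klFun x - 3 / 2 * (x - 1) ^ 2) (g' := fun x => 2 * f x)
    zero_lt_one ?_ ?_ ?_ hx
  · simp only [klFun_one] at key
    linarith
  · intro y hy
    refine ((((hasDerivAt_id y).add_const 2).mul (hasDerivAt_klFun hy.ne')).sub
      ((((hasDerivAt_id y).sub_const 1).pow 2).const_mul (3 / 2 : ℝ))).congr_deriv ?_
    simp only [f, klFun_apply, id]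
    ring
  · intro y hy hy1
    have := monotoneOn_add_one_mul_log_sub hy (Set.mem_Ioi.2 zero_lt_one) hy1.le
    simp only [f] at hf1 ⊢
    linarith
  · intro y hy
    have := monotoneOn_add_one_mul_log_sub (Set.mem_Ioi.2 zero_lt_one) (zero_lt_one.trans hy)
      hy.le
    simp only [f] at hf1 ⊢
    linarith

lemma mul_klFun_div {p q : ℝ} (hq : q ≠ 0) : q * klFun (p / q) = p * log (p / q) + q - p := by
  rw [klFun_apply]
  field_simp

lemma abs_sub_le_mul_klFun_div {p q t : ℝ} (hp : 0 < p) (hq : 0 < q) (ht : 0 < t) :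
    |p - q| ≤ t * (p + 2 * q) / 3 + q * klFun (p / q) / (2 * t) := by
  set x := p / q
  have hx : 0 < x := div_pos hp hq
  have hpx : p = q * x := by simp only [x]; field_simp
  have hpinsker := three_halves_mul_sq_sub_one_le_mul_klFun hx
  -- AM-GM applied to `3|x - 1|² ≤ 2 (x + 2) klFun x`
  have hxt : |x - 1| ≤ t * (x + 2) / 3 + klFun x / (2 * t) := by
    rw [div_add_div _ _ (by norm_num) (by positivity), le_div_iff₀ (by positivity)]
    nlinarith [sq_nonneg (2 * t * (x + 2) - 3 * |x - 1|), sq_abs (x - 1), abs_nonneg (x - 1),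
      mul_pos ht (by linarith : (0 : ℝ) < x + 2)]
  calc |p - q| = q * |x - 1| := by
        rw [hpx, ← mul_sub_one, abs_mul, abs_of_pos hq]
    _ ≤ q * (t * (x + 2) / 3 + klFun x / (2 * t)) := by gcongr
    _ = t * (p + 2 * q) / 3 + q * klFun x / (2 * t) := by rw [hpx]; ring

lemma le_sqrt_two_mul_of_forall_le_add_div {N A : ℝ} (hA : 0 ≤ A)
    (h : ∀ t, 0 < t → N ≤ t + A / (2 * t)) : N ≤ √(2 * A) := by
  rcases hA.eq_or_lt with rfl | hA
  · simpa using le_of_forall_pos_le_add fun t ht => by simpa using h t ht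
  · have hs : 0 < √(2 * A) := sqrt_pos.2 (by positivity)
    have hs2 : √(2 * A) ^ 2 = 2 * A := sq_sqrt (by positivity)
    calc N ≤ √(2 * A) / 2 + A / (2 * (√(2 * A) / 2)) := h _ (by positivity)
      _ = √(2 * A) := by field_simp; linarith

lemma log_div_mul_sub {a b c : ℝ} (ha : 0 < a) (hb : 0 < b) (hc : 0 < c) :
    log (b / c) * (a - b) = a * log (a / c) - a * log (a / b) - b * log (b / c) := by
  rw [log_div hb.ne' hc.ne', log_div ha.ne' hc.ne', log_div ha.ne' hb.ne']
  ring

lemma sqrt_le_sqrt_div_sqrt_one_add_add {κ A B e : ℝ} (hκ : 0 ≤ κ) (hA : 0 ≤ A) (hB : 0 ≤ B)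
    (he : 0 ≤ e) (h : (1 + κ) * A ≤ B + e * √A) : √A ≤ √B / √(1 + κ) + e := by
  set s := √A
  set r := √(1 + κ)
  set b := √B
  have hr : 1 ≤ r ^ 2 := by rw [sq_sqrt (by linarith)]; linarith
  have hquad : r ^ 2 * s ^ 2 ≤ b ^ 2 + e * s := by
    rwa [sq_sqrt (by linarith), sq_sqrt hA, sq_sqrt hB]
  rw [div_add' _ _ _ (by positivity), le_div_iff₀ (by positivity)]
  by_contra! hlt
  have hb : b ^ 2 < (r * (s - e)) ^ 2 :=
    pow_lt_pow_left₀ (by linarith) (sqrt_nonneg B) two_ne_zero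
  have hse : 0 < s - e := by nlinarith [sqrt_nonneg B, sqrt_nonneg (1 + κ)]
  have hfactor : s - 2 * r ^ 2 * s + r ^ 2 * e ≤ 0 := by
    nlinarith [mul_le_mul_of_nonneg_left hr (sqrt_nonneg A), mul_pos (one_pos.trans_le hr) hse]
  have hes := mul_nonpos_of_nonneg_of_nonpos he hfactor
  nlinarith

noncomputable def klDensity {Θ : Type*} [MeasurableSpace Θ] (μ : Measure Θ) (p q : Θ → ℝ) :
    ℝ :=
  ∫ θ, p θ * log (p θ / q θ) ∂μ

section Densities

variable {Θ : Type*} [MeasurableSpace Θ] {μ : Measure Θ} {p q r : Θ → ℝ}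

lemma abs_integral_mul_le_of_abs_sub_le {η g : Θ → ℝ} {ε : ℝ}
    (hosc : ∀ θ θ', |η θ - η θ'| ≤ ε) (hg : Integrable g μ) (hg0 : ∫ θ, g θ ∂μ = 0)
    (hηg : Integrable (fun θ => η θ * g θ) μ) :
    |∫ θ, η θ * g θ ∂μ| ≤ ε * ∫ θ, |g θ| ∂μ := by
  rcases isEmpty_or_nonempty Θ with hΘ | hΘ
  · simp [integral_of_isEmpty]
  obtain ⟨θ₀⟩ := hΘ
  -- `∫ g = 0` lets us subtract the constant `η θ₀`, after which `|η - η θ₀| ≤ ε`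
  have hcenter : ∫ θ, η θ * g θ ∂μ = ∫ θ, (η θ - η θ₀) * g θ ∂μ := by
    simp only [sub_mul]
    rw [integral_sub hηg (hg.const_mul _), integral_const_mul, hg0, mul_zero, sub_zero]
  calc |∫ θ, η θ * g θ ∂μ| = |∫ θ, (η θ - η θ₀) * g θ ∂μ| := by rw [hcenter]
    _ ≤ ∫ θ, |(η θ - η θ₀) * g θ| ∂μ := abs_integral_le_integral_abs
    _ ≤ ∫ θ, ε * |g θ| ∂μ := by
        refine integral_mono_of_nonneg (.of_forall fun θ => abs_nonneg _)
          (hg.abs.const_mul ε) (.of_forall fun θ => ?_)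
        simp only [abs_mul]
        exact mul_le_mul_of_nonneg_right (hosc θ θ₀) (abs_nonneg _)
    _ = ε * ∫ θ, |g θ| ∂μ := integral_const_mul _ _

lemma integrable_mul_klFun_div (hq : ∀ θ, 0 < q θ) (hpi : Integrable p μ)
    (hqi : Integrable q μ) (hint : Integrable (fun θ => p θ * log (p θ / q θ)) μ) :
    Integrable (fun θ => q θ * klFun (p θ / q θ)) μ :=
  ((hint.add hqi).sub hpi).congr (.of_forall fun θ => (mul_klFun_div (hq θ).ne').symm)

lemma integral_mul_klFun_div (hq : ∀ θ, 0 < q θ) (hp1 : ∫ θ, p θ ∂μ = 1)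
    (hq1 : ∫ θ, q θ ∂μ = 1) (hint : Integrable (fun θ => p θ * log (p θ / q θ)) μ) :
    ∫ θ, q θ * klFun (p θ / q θ) ∂μ = klDensity μ p q := by
  have hpi := Integrable.of_integral_ne_zero (hp1 ▸ one_ne_zero)
  have hqi := Integrable.of_integral_ne_zero (hq1 ▸ one_ne_zero)
  have hsum : Integrable (fun θ => p θ * log (p θ / q θ) + q θ) μ := hint.add hqi
  simp only [mul_klFun_div (hq _).ne']
  rw [integral_sub hsum hpi, integral_add hint hqi, hp1, hq1, add_sub_cancel_right]
  rfl

lemma klDensity_nonneg (hp : ∀ θ, 0 ≤ p θ) (hq : ∀ θ, 0 < q θ) (hp1 : ∫ θ, p θ ∂μ = 1)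
    (hq1 : ∫ θ, q θ ∂μ = 1) : 0 ≤ klDensity μ p q := by
  by_cases hint : Integrable (fun θ => p θ * log (p θ / q θ)) μ
  · rw [← integral_mul_klFun_div hq hp1 hq1 hint]
    exact integral_nonneg fun θ =>
      mul_nonneg (hq θ).le (klFun_nonneg (div_nonneg (hp θ) (hq θ).le))
  · exact (integral_undef hint).ge

lemma integral_abs_sub_le_sqrt_two_mul_klDensity (hp : ∀ θ, 0 < p θ) (hq : ∀ θ, 0 < q θ)
    (hp1 : ∫ θ, p θ ∂μ = 1) (hq1 : ∫ θ, q θ ∂μ = 1)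
    (hint : Integrable (fun θ => p θ * log (p θ / q θ)) μ) :
    ∫ θ, |p θ - q θ| ∂μ ≤ √(2 * klDensity μ p q) := by
  have hpi := Integrable.of_integral_ne_zero (hp1 ▸ one_ne_zero)
  have hqi := Integrable.of_integral_ne_zero (hq1 ▸ one_ne_zero)
  refine le_sqrt_two_mul_of_forall_le_add_div
    (klDensity_nonneg (fun θ => (hp θ).le) hq hp1 hq1) fun t ht => ?_
  have hlin : Integrable (fun θ => t * (p θ + 2 * q θ) / 3) μ :=
    ((hpi.add (hqi.const_mul 2)).const_mul t).div_const 3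
  have hkl : Integrable (fun θ => q θ * klFun (p θ / q θ) / (2 * t)) μ :=
    (integrable_mul_klFun_div hq hpi hqi hint).div_const _
  calc ∫ θ, |p θ - q θ| ∂μ
      ≤ ∫ θ, (t * (p θ + 2 * q θ) / 3 + q θ * klFun (p θ / q θ) / (2 * t)) ∂μ :=
        integral_mono (hpi.sub hqi).abs (hlin.add hkl)
          fun θ => abs_sub_le_mul_klFun_div (hp θ) (hq θ) ht
    _ = t + klDensity μ p q / (2 * t) := by
        rw [integral_add hlin hkl, integral_div, integral_const_mul, integral_add hpi
          (hqi.const_mul 2), integral_const_mul, hp1, hq1, integral_div,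
          integral_mul_klFun_div hq hp1 hq1 hint]
        ring

lemma integrable_log_div_mul_sub (hp : ∀ θ, 0 < p θ) (hq : ∀ θ, 0 < q θ) (hr : ∀ θ, 0 < r θ)
    (hpr : Integrable (fun θ => p θ * log (p θ / r θ)) μ)
    (hpq : Integrable (fun θ => p θ * log (p θ / q θ)) μ)
    (hqr : Integrable (fun θ => q θ * log (q θ / r θ)) μ) :
    Integrable (fun θ => log (q θ / r θ) * (p θ - q θ)) μ :=
  ((hpr.sub hpq).sub hqr).congr
    (.of_forall fun θ => (log_div_mul_sub (hp θ) (hq θ) (hr θ)).symm)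

lemma integral_log_div_mul_sub (hp : ∀ θ, 0 < p θ) (hq : ∀ θ, 0 < q θ) (hr : ∀ θ, 0 < r θ)
    (hpr : Integrable (fun θ => p θ * log (p θ / r θ)) μ)
    (hpq : Integrable (fun θ => p θ * log (p θ / q θ)) μ)
    (hqr : Integrable (fun θ => q θ * log (q θ / r θ)) μ) :
    ∫ θ, log (q θ / r θ) * (p θ - q θ) ∂μ
      = klDensity μ p r - klDensity μ p q - klDensity μ q r := by
  have hdiff : Integrable (fun θ => p θ * log (p θ / r θ) - p θ * log (p θ / q θ)) μ :=
    hpr.sub hpq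
  simp only [log_div_mul_sub (hp _) (hq _) (hr _)]
  rw [integral_sub hdiff hqr, integral_sub hpr hpq]
  rfl

lemma one_add_mul_klDensity_add_klDensity_le {a : Θ → ℝ} {lam τ ε : ℝ} (hτ : 0 < τ)
    (hp : ∀ θ, 0 < p θ) (hq : ∀ θ, 0 < q θ) (hr : ∀ θ, 0 < r θ)
    (hp1 : ∫ θ, p θ ∂μ = 1) (hq1 : ∫ θ, q θ ∂μ = 1)
    (hpr : Integrable (fun θ => p θ * log (p θ / r θ)) μ)
    (hpq : Integrable (fun θ => p θ * log (p θ / q θ)) μ)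
    (hqr : Integrable (fun θ => q θ * log (q θ / r θ)) μ)
    (ha : Integrable (fun θ => a θ * (p θ - q θ)) μ)
    (hosc : ∀ θ θ', |(a θ + 1 / τ * log (q θ / r θ)) - (a θ' + 1 / τ * log (q θ' / r θ'))| ≤ ε)
    (hdescent : ∫ θ, a θ * (p θ - q θ) ∂μ + lam / 2 * klDensity μ p q ≤ 0) :
    (1 + τ * lam / 2) * klDensity μ p q + klDensity μ q r
      ≤ klDensity μ p r + τ * ε * ∫ θ, |p θ - q θ| ∂μ := by
  have hpi := Integrable.of_integral_ne_zero (hp1 ▸ one_ne_zero)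
  have hqi := Integrable.of_integral_ne_zero (hq1 ▸ one_ne_zero)
  have hlog := integrable_log_div_mul_sub hp hq hr hpr hpq hqr
  have hηint : Integrable (fun θ => (a θ + 1 / τ * log (q θ / r θ)) * (p θ - q θ)) μ := by
    refine (ha.add (hlog.const_mul (1 / τ))).congr (.of_forall fun θ => ?_)
    simp only [Pi.add_apply]
    ring
  have hη : ∫ θ, (a θ + 1 / τ * log (q θ / r θ)) * (p θ - q θ) ∂μ
      = ∫ θ, a θ * (p θ - q θ) ∂μ
        + 1 / τ * (klDensity μ p r - klDensity μ p q - klDensity μ q r) := by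
    simp only [add_mul, mul_assoc]
    rw [integral_add ha (hlog.const_mul _), integral_const_mul,
      integral_log_div_mul_sub hp hq hr hpr hpq hqr]
  have hηbound := abs_integral_mul_le_of_abs_sub_le (g := fun θ => p θ - q θ) hosc
    (hpi.sub hqi) (by rw [integral_sub hpi hqi, hp1, hq1, sub_self]) hηint
  rw [hη] at hηbound
  have hτη := mul_le_mul_of_nonneg_left (abs_le.1 hηbound).1 hτ.le
  rw [mul_add, ← mul_assoc τ (1 / τ), mul_one_div_cancel hτ.ne', one_mul] at hτη
  linarith [mul_nonpos_of_nonneg_of_nonpos hτ.le hdescent]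

end Densities

/-- One-step inequality for inexact IKLPD under λ-relative strong convexity and an
oscillation bound on the first variation of the implicit subproblem. -/
theorem inexact_iklpd_one_step {Θ : Type*} [MeasurableSpace Θ] (μ : Measure Θ)
    (F : (Θ → ℝ) → ℝ) (δF : (Θ → ℝ) → Θ → ℝ)
    (lam τ ε : ℝ) (hlam : 0 < lam) (hτ : 0 < τ) (hε : 0 ≤ ε)
    (ρstar ρk ρprev : Θ → ℝ)
    (hρstar : ∀ θ, 0 < ρstar θ) (hρk : ∀ θ, 0 < ρk θ) (hρprev : ∀ θ, 0 < ρprev θ)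
    (h1 : ∫ θ, ρstar θ ∂μ = 1) (h2 : ∫ θ, ρk θ ∂μ = 1) (h3 : ∫ θ, ρprev θ ∂μ = 1)
    -- λ-relative strong convexity (with modulus λ/2, as in the paper's derivation)
    (hconv : ∀ f g : Θ → ℝ, (∀ θ, 0 < f θ) → (∀ θ, 0 < g θ) →
      (∫ θ, f θ ∂μ = 1) → (∫ θ, g θ ∂μ = 1) →
      F g + (∫ θ, δF g θ * (f θ - g θ) ∂μ)
          + (lam / 2) * (∫ θ, f θ * Real.log (f θ / g θ) ∂μ) ≤ F f)
    -- ρ* is a global minimizer of F among probability densities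
    (hmin : ∀ f : Θ → ℝ, (∀ θ, 0 < f θ) → (∫ θ, f θ ∂μ = 1) → F ρstar ≤ F f)
    -- oscillation of η_k = δF(ρk) + (1/τ) log(ρk/ρprev) is at most ε
    (hosc : ∀ θ θ' : Θ,
      |(δF ρk θ + (1 / τ) * Real.log (ρk θ / ρprev θ))
        - (δF ρk θ' + (1 / τ) * Real.log (ρk θ' / ρprev θ'))| ≤ ε)
    (i1 : Integrable (fun θ => ρstar θ * Real.log (ρstar θ / ρk θ)) μ)
    (i2 : Integrable (fun θ => ρstar θ * Real.log (ρstar θ / ρprev θ)) μ)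
    (i3 : Integrable (fun θ => ρk θ * Real.log (ρk θ / ρprev θ)) μ)
    (i4 : Integrable (fun θ => δF ρk θ * (ρstar θ - ρk θ)) μ) :
    Real.sqrt (∫ θ, ρstar θ * Real.log (ρstar θ / ρk θ) ∂μ)
      ≤ Real.sqrt (∫ θ, ρstar θ * Real.log (ρstar θ / ρprev θ) ∂μ)
          / Real.sqrt (1 + τ * lam / 2)
        + Real.sqrt 2 * τ * ε := by
  change √(klDensity μ ρstar ρk)
    ≤ √(klDensity μ ρstar ρprev) / √(1 + τ * lam / 2) + √2 * τ * ε
  have hconv_k : F ρk + ∫ θ, δF ρk θ * (ρstar θ - ρk θ) ∂μ + lam / 2 * klDensity μ ρstar ρk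
      ≤ F ρstar := hconv ρstar ρk hρstar hρk h1 h2
  have hstep := one_add_mul_klDensity_add_klDensity_le (lam := lam) hτ hρstar hρk hρprev h1 h2
    i2 i1 i3 i4 hosc (by linarith [hmin ρk hρk h2])
  have hpinsker := integral_abs_sub_le_sqrt_two_mul_klDensity hρstar hρk h1 h2 i1
  rw [sqrt_mul zero_le_two] at hpinsker
  have hC := klDensity_nonneg (fun θ => (hρk θ).le) hρprev h2 h3
  refine sqrt_le_sqrt_div_sqrt_one_add_add (by positivity)
    (klDensity_nonneg (fun θ => (hρstar θ).le) hρk h1 h2)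
    (klDensity_nonneg (fun θ => (hρstar θ).le) hρprev h1 h3) (by positivity) ?_
  calc (1 + τ * lam / 2) * klDensity μ ρstar ρk
      ≤ klDensity μ ρstar ρprev + τ * ε * ∫ θ, |ρstar θ - ρk θ| ∂μ := by linarith
    _ ≤ klDensity μ ρstar ρprev + τ * ε * (√2 * √(klDensity μ ρstar ρk)) := by gcongr
    _ = klDensity μ ρstar ρprev + √2 * τ * ε * √(klDensity μ ρstar ρk) := by ring
end
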